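/- arXiv:2502.20334 — 5 statements merged into one kernel-verified Lean document; each statement's English description precedes it below -/
import Mathlib

section
/- Let m ≥ 2 be an integer and let B > 0, c > 0 and p ∈ (0,1) satisfy B·(1 - (1-p)^m) = m·p·c with c < B. Then the probability that no builder includes, namely (1-p)^m, is at most (c/B)^{m/(m-1)}; consequently the defender's winning probability 1-(1-p)^m is at least 1 - (c/B)^{m/(m-1)}. -/
theorem stmt_3 (m : ℕ) (hm : 2 ≤ m) (B c p : ℝ) (hB : 0 < B) (hc : 0 < c)
    (hp0 : 0 < p) (hp1 : p < 1) (hind : B * (1 - (1 - p) ^ m) = m * p * c)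
    (hcB : c < B) :
    (1 - p) ^ m ≤ (c / B) ^ ((m : ℝ) / (m - 1)) ∧
      1 - (c / B) ^ ((m : ℝ) / (m - 1)) ≤ 1 - (1 - p) ^ m := by
  set q : ℝ := 1 - p with hq
  have hq0 : 0 < q := by simp [hq]; linarith
  have hq1 : q < 1 := by simp [hq]; linarith
  have hm1 : 1 ≤ m := by omega
  have hmR : (2 : ℝ) ≤ (m : ℝ) := by exact_mod_cast hm
  -- geometric sum
  have hgeom : 1 - q ^ m = (1 - q) * ∑ i ∈ Finset.range m, q ^ i := by
    have := geom_sum_mul q m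
    nlinarith [this]
  have hsum : (m : ℝ) * q ^ (m - 1) ≤ ∑ i ∈ Finset.range m, q ^ i := by
    calc (m : ℝ) * q ^ (m - 1)
        = ∑ _i ∈ Finset.range m, q ^ (m - 1) := by
          rw [Finset.sum_const, Finset.card_range, nsmul_eq_mul]
      _ ≤ ∑ i ∈ Finset.range m, q ^ i := by
          apply Finset.sum_le_sum
          intro i hi
          exact pow_le_pow_of_le_one hq0.le hq1.le (by
            have := Finset.mem_range.mp hi; omega)
  have hkey : (m : ℝ) * (1 - q) * q ^ (m - 1) ≤ 1 - q ^ m := by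
    rw [hgeom]
    have hp' : 0 < 1 - q := by linarith
    nlinarith [hsum]
  -- q^(m-1) ≤ c/B
  have hp_eq : p = 1 - q := by simp [hq]
  have h1 : q ^ (m - 1) ≤ c / B := by
    rw [le_div_iff₀ hB]
    have hmp : 0 < (m : ℝ) * p := by positivity
    have h2 : (m : ℝ) * p * (q ^ (m - 1) * B) ≤ (m : ℝ) * p * c := by
      rw [← hind, hp_eq]
      nlinarith [hkey]
    exact le_of_mul_le_mul_left h2 hmp
  have hqpow : 0 ≤ q ^ (m - 1) := by positivity
  have hden : (m : ℝ) - 1 ≠ 0 := by linarith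
  have hexp : 0 ≤ (m : ℝ) / ((m : ℝ) - 1) := div_nonneg (by linarith) (by linarith)
  have hcast : ((m - 1 : ℕ) : ℝ) = (m : ℝ) - 1 := by
    push_cast [hm1]; ring
  have hrw : (q ^ (m - 1)) ^ ((m : ℝ) / ((m : ℝ) - 1)) = q ^ m := by
    rw [← Real.rpow_natCast q (m - 1), ← Real.rpow_mul hq0.le, hcast,
      mul_div_cancel₀ _ hden, Real.rpow_natCast]
  have hmain : (1 - p) ^ m ≤ (c / B) ^ ((m : ℝ) / ((m : ℝ) - 1)) := by
    rw [show (1 - p) = q from rfl, ← hrw]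
    exact Real.rpow_le_rpow hqpow h1 hexp
  exact ⟨hmain, by linarith⟩
end

section
/- Fix a real k ≥ 1. Define a function 𝒜(t, n, s) for integers 1 ≤ n ≤ t and 0 ≤ s ≤ t by: 𝒜(t, 1, s) = k·s + (t-s); and for n ≥ 2, 𝒜(t, n, s) = 𝒜(t-1, n-1, s) · (1 + 𝒜(t-1, n, s)) / (1 + 𝒜(t-1, n-1, s)) when s ≤ t-1, and 𝒜(t, n, t) = 𝒜(t-1, n-1, t-1) · (k + 𝒜(t-1, n, t-1)) / (k + 𝒜(t-1, n-1, t-1)) (with 𝒜(t-1, t, ·) interpreted via 𝒜(t, t, s) = k/(s + k·(t-s))). Then for all integers t ≥ 1, 1 ≤ n ≤ t, and 0 ≤ s ≤ t with n - 1 ≤ s, we have (t + s·(k-1) - k·(n-1))/n ≤ 𝒜(t, n, s) ≤ (t + s·(k-1) - (n-1))/n. -/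
/-!
Write `L = t + s(k-1) - k(n-1)` and `U = t + s(k-1) - (n-1)`, so the claim is
`L/n ≤ 𝒜 ≤ U/n`. Both recursions have the shape `𝒜 = a (c + b) / (c + a)` with `c = 1` or
`c = k`, which is increasing in `a` and `b`, and for `a = (m + c)/(n - 1)`, `b = m/n` it equals
`(m + c)/n` exactly. Feeding in the inductive bounds for `𝒜(t-1, n-1, ·)` and `𝒜(t-1, n, ·)`
therefore moves `L` and `U` up by `c`, which is precisely their increase from `t - 1` to `t`
(when `s` grows with `t`, the increase is `1 + (k - 1) = k`). The cases `n = 1` and `n = t` are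
direct computations.
-/

noncomputable def recurStep (c a b : ℝ) : ℝ := a * (c + b) / (c + a)

lemma recurStep_mono {c a a' b b' : ℝ} (hc : 0 < c) (ha' : 0 < a') (hb' : 0 ≤ b')
    (ha : a' ≤ a) (hb : b' ≤ b) : recurStep c a' b' ≤ recurStep c a b := by
  have hfrac : a' / (c + a') ≤ a / (c + a) := by
    rw [div_le_div_iff₀ (by positivity) (by linarith)]
    nlinarith
  calc recurStep c a' b' = a' / (c + a') * (c + b') := by rw [recurStep, mul_div_right_comm]
    _ ≤ a / (c + a) * (c + b) := by gcongr; exact div_nonneg (by linarith) (by linarith)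
    _ = recurStep c a b := by rw [recurStep, mul_div_right_comm]

lemma recurStep_eq {c m N : ℝ} (hN : N ≠ 0) (hN₁ : N - 1 ≠ 0) (h : c * N + m ≠ 0) :
    recurStep c ((m + c) / (N - 1)) (m / N) = (m + c) / N := by
  have h' : c * (N - 1) + (m + c) ≠ 0 := by contrapose! h; linarith
  unfold recurStep
  field_simp
  ring

lemma recurStep_bounds {c k N L U a b : ℝ} (hc : 1 ≤ c) (hck : c ≤ k) (hN : 2 ≤ N)
    (hL : 0 ≤ L) (ha : (L + k) / (N - 1) ≤ a ∧ a ≤ (U + 1) / (N - 1))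
    (hb : L / N ≤ b ∧ b ≤ U / N) :
    (L + c) / N ≤ recurStep c a b ∧ recurStep c a b ≤ (U + c) / N := by
  have hN₀ : 0 < N := by linarith
  have hN₁ : 0 < N - 1 := by linarith
  have hLa : (L + c) / (N - 1) ≤ a := le_trans (by gcongr) ha.1
  have ha₀ : 0 < a := lt_of_lt_of_le (by positivity) hLa
  have hb₀ : 0 ≤ b := le_trans (by positivity) hb.1
  have hU : 0 ≤ U := by simpa using (le_div_iff₀ hN₀).1 (hb₀.trans hb.2)
  constructor
  · calc (L + c) / N = recurStep c ((L + c) / (N - 1)) (L / N) :=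
          (recurStep_eq hN₀.ne' hN₁.ne' (by positivity)).symm
      _ ≤ recurStep c a b :=
          recurStep_mono (by linarith) (by positivity) (by positivity) hLa hb.1
  · calc recurStep c a b ≤ recurStep c ((U + c) / (N - 1)) (U / N) :=
          recurStep_mono (by linarith) ha₀ hb₀ (ha.2.trans (by gcongr)) hb.2
      _ = (U + c) / N := recurStep_eq hN₀.ne' hN₁.ne' (by positivity)

def WithinBounds (k : ℝ) (A : ℕ → ℕ → ℕ → ℝ) (t n s : ℕ) : Prop :=
  ((t : ℝ) + s * (k - 1) - k * ((n : ℝ) - 1)) / n ≤ A t n s ∧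
    A t n s ≤ ((t : ℝ) + s * (k - 1) - ((n : ℝ) - 1)) / n

namespace WithinBounds

variable {k : ℝ} {A : ℕ → ℕ → ℕ → ℝ}

lemma one (hbase : ∀ t s : ℕ, 1 ≤ t → s ≤ t → A t 1 s = k * s + ((t : ℝ) - s))
    {t s : ℕ} (ht : 1 ≤ t) (hs : s ≤ t) : WithinBounds k A t 1 s := by
  unfold WithinBounds
  rw [hbase t s ht hs]
  constructor <;> norm_num <;> linarith

lemma diag (hk : 1 ≤ k)
    (hdiag : ∀ t s : ℕ, 1 ≤ t → s ≤ t → A t t s = k / (s + k * ((t : ℝ) - s)))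
    {t s : ℕ} (ht : 1 ≤ t) (hst : s ≤ t) (hts : t - 1 ≤ s) : WithinBounds k A t t s := by
  unfold WithinBounds
  rw [hdiag t s ht hst]
  obtain ⟨m, rfl⟩ : ∃ m, t = m + 1 := ⟨t - 1, by omega⟩
  have hm : (0 : ℝ) ≤ m := m.cast_nonneg
  have hk₁ : 0 ≤ (k - 1) * m := mul_nonneg (by linarith) hm
  obtain hs | hs : s = m ∨ s = m + 1 := by omega
  all_goals
    subst s
    push_cast
    constructor <;> rw [div_le_div_iff₀ (by nlinarith) (by nlinarith)] <;>
      nlinarith [mul_nonneg hk₁ hm, mul_nonneg hk₁ (by linarith : (0 : ℝ) ≤ k - 1)]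

/-- `hs'` says that `L` and `U` grow by exactly `c` from `(t, s)` to `(t + 1, s')`. -/
lemma succ {c : ℝ} (hc : 1 ≤ c) (hck : c ≤ k) {t n s s' : ℕ} (hn : 2 ≤ n) (hnt : n ≤ t)
    (hs : n - 1 ≤ s) (hs' : (s' : ℝ) * (k - 1) + 1 = s * (k - 1) + c)
    (hA : A (t + 1) n s' = recurStep c (A t (n - 1) s) (A t n s))
    (h₁ : WithinBounds k A t (n - 1) s) (h₂ : WithinBounds k A t n s) :
    WithinBounds k A (t + 1) n s' := by
  have hn₁ : ((n - 1 : ℕ) : ℝ) = n - 1 := by rw [Nat.cast_sub (by omega), Nat.cast_one]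
  have hnt' : (n : ℝ) - 1 ≤ t := by rw [← hn₁]; exact_mod_cast (by omega : n - 1 ≤ t)
  have hns : (n : ℝ) - 1 ≤ s := by rw [← hn₁]; exact_mod_cast hs
  unfold WithinBounds at h₁ h₂ ⊢
  rw [hn₁] at h₁
  have hbounds := recurStep_bounds (L := t + s * (k - 1) - k * ((n : ℝ) - 1))
    (U := t + s * (k - 1) - ((n : ℝ) - 1)) hc hck (by exact_mod_cast hn)
    (by nlinarith) (by convert h₁ using 3 <;> ring) h₂
  rw [hA]
  constructor
  · convert hbounds.1 using 2; push_cast; linear_combination hs'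
  · convert hbounds.2 using 2; push_cast; linear_combination hs'

end WithinBounds

theorem stmt_6 (k : ℝ) (hk : 1 ≤ k) (A : ℕ → ℕ → ℕ → ℝ)
    (hbase : ∀ t s : ℕ, 1 ≤ t → s ≤ t → A t 1 s = k * s + ((t : ℝ) - s))
    (hdiag : ∀ t s : ℕ, 1 ≤ t → s ≤ t → A t t s = k / (s + k * ((t : ℝ) - s)))
    (hreg : ∀ t n s : ℕ, 2 ≤ n → n < t → s ≤ t - 1 →
      A t n s = A (t - 1) (n - 1) s * (1 + A (t - 1) n s) / (1 + A (t - 1) (n - 1) s))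
    (hspec : ∀ t n : ℕ, 2 ≤ n → n < t →
      A t n t = A (t - 1) (n - 1) (t - 1) * (k + A (t - 1) n (t - 1)) /
        (k + A (t - 1) (n - 1) (t - 1))) :
    ∀ t n s : ℕ, 1 ≤ n → n ≤ t → s ≤ t → n - 1 ≤ s →
      ((t : ℝ) + s * (k - 1) - k * ((n : ℝ) - 1)) / n ≤ A t n s ∧
        A t n s ≤ ((t : ℝ) + s * (k - 1) - ((n : ℝ) - 1)) / n := by
  intro t
  induction t with
  | zero => intro n s _ hnt _ _; omega
  | succ t ih =>
    intro n s hn hnt hst hns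
    obtain rfl | rfl | ⟨hn₂, hnt⟩ : n = 1 ∨ n = t + 1 ∨ (2 ≤ n ∧ n ≤ t) := by omega
    · exact WithinBounds.one hbase (by omega) hst
    · exact WithinBounds.diag hk hdiag (by omega) hst hns
    obtain hst | rfl : s ≤ t ∨ s = t + 1 := by omega
    · exact WithinBounds.succ le_rfl hk hn₂ hnt hns (by ring)
        (hreg (t + 1) n s hn₂ (by omega) (by omega))
        (ih (n - 1) s (by omega) (by omega) hst (by omega)) (ih n s (by omega) hnt hst hns)
    · exact WithinBounds.succ hk le_rfl hn₂ hnt (by omega) (by push_cast; ring)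
        (hspec (t + 1) n hn₂ (by omega))
        (ih (n - 1) t (by omega) (by omega) le_rfl (by omega))
        (ih n t (by omega) hnt le_rfl (by omega))
end

section
/- Fix a real k ≥ 1 and define TS(t, n, s) = (t - s)/n + k·(s - n + 1)/n. Suppose f(t, n, s) is any function satisfying TS(t, n, s) ≤ f(t, n, s) ≤ (t + s·(k-1) - (n-1))/n for all valid (t, n, s) with n-1 ≤ s ≤ t and 1 ≤ n ≤ t. Then for every ε > 0 there exists δ > 0 such that for all (t, n, s) in the domain with k·n/(t + (k-1)·s) < δ, we have |TS(t, n, s)/f(t, n, s) - 1| < ε. -/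
/-- Payoff guarantee of the defender's simple constant-bidding strategy. -/
noncomputable def TS (k : ℝ) (t n s : ℕ) : ℝ :=
  ((t : ℝ) - s) / n + k * ((s : ℝ) - n + 1) / n

theorem stmt_7 (k : ℝ) (hk : 1 ≤ k) (f : ℕ → ℕ → ℕ → ℝ)
    (hf : ∀ t n s : ℕ, 1 ≤ n → n ≤ t → n - 1 ≤ s → s ≤ t →
      TS k t n s ≤ f t n s ∧ f t n s ≤ ((t : ℝ) + s * (k - 1) - ((n : ℝ) - 1)) / n) :
    ∀ ε : ℝ, 0 < ε → ∃ δ : ℝ, 0 < δ ∧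
      ∀ t n s : ℕ, 1 ≤ n → n ≤ t → n - 1 ≤ s → s ≤ t →
        k * n / ((t : ℝ) + (k - 1) * s) < δ →
        |TS k t n s / f t n s - 1| < ε := by
  intro ε hε
  refine ⟨ε / (1 + ε), by positivity, ?_⟩
  intro t n s hn hnt hs hst hδ
  obtain ⟨hf1, hf2⟩ := hf t n s hn hnt hs hst
  have hn1 : (1 : ℝ) ≤ (n : ℝ) := by exact_mod_cast hn
  have hnpos : (0 : ℝ) < (n : ℝ) := by linarith
  have hnt' : (n : ℝ) ≤ (t : ℝ) := by exact_mod_cast hnt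
  have hst' : (s : ℝ) ≤ (t : ℝ) := by exact_mod_cast hst
  have hs' : (n : ℝ) - 1 ≤ (s : ℝ) := by
    have h : ((n - 1 : ℕ) : ℝ) ≤ (s : ℝ) := Nat.cast_le.mpr hs
    rwa [Nat.cast_sub hn, Nat.cast_one] at h
  have hspos : (0 : ℝ) ≤ (s : ℝ) := Nat.cast_nonneg s
  have hA : (0 : ℝ) < (t : ℝ) + (k - 1) * s := by nlinarith
  have hkn : k * n * (1 + ε) < ε * ((t : ℝ) + (k - 1) * s) := by
    rw [div_lt_div_iff₀ hA (by linarith : (0:ℝ) < 1 + ε)] at hδ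
    linarith
  have hTS : TS k t n s = (((t : ℝ) + (k - 1) * s) - k * n + k) / n := by
    unfold TS; field_simp; ring
  have hkpos : (0 : ℝ) < k := by linarith
  have hnum : (0 : ℝ) < ((t : ℝ) + (k - 1) * s) - k * n + k := by nlinarith
  have hTSpos : 0 < TS k t n s := by rw [hTS]; positivity
  have hfpos : 0 < f t n s := lt_of_lt_of_le hTSpos hf1
  -- key: U - TS < ε * TS
  have hscal : (k - 1) * ((n : ℝ) - 1) < ε * (((t : ℝ) + (k - 1) * s) - k * n + k) := by
    nlinarith [hkn, mul_pos hε hkpos, hkpos, hn1]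
  have hkey : ((t : ℝ) + s * (k - 1) - ((n : ℝ) - 1)) / n - TS k t n s < ε * TS k t n s := by
    rw [hTS, ← sub_div, ← mul_div_assoc, div_lt_div_iff₀ hnpos hnpos]
    nlinarith [mul_lt_mul_of_pos_right hscal hnpos]
  have h3 : f t n s - TS k t n s < ε * TS k t n s := lt_of_le_of_lt (by linarith) hkey
  have h4 : ε * TS k t n s ≤ ε * f t n s := mul_le_mul_of_nonneg_left hf1 hε.le
  have h1 : TS k t n s / f t n s ≤ 1 := (div_le_one hfpos).mpr hf1
  have h2 : 1 - ε < TS k t n s / f t n s := by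
    rw [lt_div_iff₀ hfpos]
    nlinarith [h3, h4]
  rw [abs_lt]
  constructor <;> linarith
end

section
/- For all integers T ≥ 1 and 1 ≤ N ≤ T and reals A ≥ 0, D ≥ 0, in the sequential bidding game where in each round Daria first bids b ≤ (her remaining budget), then Alice bids b' ≤ (her remaining budget), Alice wins the round iff b' ≥ b, the round winner's budget is reduced by her bid, and Daria wins the game iff she wins N rounds before Alice wins T - N + 1 rounds: Alice has a winning strategy if and only if A ≥ D·(T - N + 1)/N. -/
/-- `DariaWins t n d a` : in the sequential bidding game with `t` rounds remaining,
Daria needing `n` round-wins, Daria's budget `d` and Alice's budget `a`,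
Daria (moving first in each round) has a winning strategy. In each round Daria
bids `b ∈ [0, d]`, then Alice bids `b' ∈ [0, a]`; Alice wins the round iff `b' ≥ b`;
the round winner's budget is reduced by her bid; Daria wins the game upon `n`
round-wins (i.e. when she wins a round with `n = 1`). -/
def DariaWins : ℕ → ℕ → ℝ → ℝ → Prop
  | 0, _, _, _ => False
  | t + 1, n, d, a => ∃ b : ℝ, 0 ≤ b ∧ b ≤ d ∧ ∀ b' : ℝ, 0 ≤ b' → b' ≤ a →
      (b ≤ b' → DariaWins t n d (a - b')) ∧
      (b' < b → (n = 1 ∨ DariaWins t (n - 1) (d - b) a))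

lemma dariaWins_succ (t n : ℕ) (d a : ℝ) :
    DariaWins (t+1) n d a ↔ ∃ b : ℝ, 0 ≤ b ∧ b ≤ d ∧ ∀ b' : ℝ, 0 ≤ b' → b' ≤ a →
      (b ≤ b' → DariaWins t n d (a - b')) ∧
      (b' < b → (n = 1 ∨ DariaWins t (n - 1) (d - b) a)) := Iff.rfl

/-- Daria cannot win if she needs more round-wins than there are rounds. -/
lemma lemA : ∀ t n : ℕ, ∀ d a : ℝ, 0 ≤ a → t < n → ¬ DariaWins t n d a := by
  intro t
  induction t with
  | zero => intro n d a _ _ h; exact h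
  | succ t ih =>
    intro n d a ha htn hD
    rw [dariaWins_succ] at hD
    obtain ⟨b, hb0, hbd, h⟩ := hD
    obtain ⟨h1, h2⟩ := h 0 le_rfl ha
    by_cases hb : b ≤ 0
    · exact ih n d (a - 0) (by simpa using ha) (by omega) (h1 hb)
    · rcases h2 (lt_of_not_ge hb) with h' | h'
      · omega
      · exact ih (n-1) (d-b) a ha (by omega) h'

set_option maxHeartbeats 1000000 in
/-- Exact characterization of Daria's winning states. -/
lemma lemB : ∀ t n : ℕ, ∀ d a : ℝ, 1 ≤ n → n ≤ t → 0 ≤ a → 0 ≤ d →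
    (DariaWins t n d a ↔ (n:ℝ) * a < d * ((t:ℝ) - n + 1)) := by
  intro t
  induction t with
  | zero => intro n d a h1 h2; omega
  | succ t ih =>
    intro n d a hn1 hnt ha hd
    have hn1' : (1:ℝ) ≤ (n:ℝ) := by exact_mod_cast hn1
    have hnt' : (n:ℝ) ≤ (t:ℝ) + 1 := by exact_mod_cast hnt
    have hnpos : (0:ℝ) < n := by linarith
    set M : ℝ := (t:ℝ) - (n:ℝ) + 2 with hM
    have hM1 : 1 ≤ M := by simp only [hM]; linarith
    have hMpos : 0 < M := by linarith
    have hMt : M ≤ (t:ℝ) + 1 := by simp only [hM]; linarith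
    have hcast : ((t+1:ℕ):ℝ) - (n:ℝ) + 1 = M := by push_cast; simp only [hM]; ring
    have hcn : ((n-1:ℕ):ℝ) = (n:ℝ) - 1 := by
      push_cast [Nat.cast_sub hn1]; ring
    rw [dariaWins_succ, hcast]
    constructor
    · rintro ⟨b, hb0, hbd, h⟩
      by_contra hle
      push_neg at hle  -- hle : d * M ≤ n * a
      by_cases hn' : n = 1
      · subst hn'
        simp only [Nat.cast_one, one_mul] at hle ⊢
        have hba : b ≤ a := by
          nlinarith [mul_nonneg hd (show (0:ℝ) ≤ M - 1 by linarith)]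
        have hD := (h b hb0 hba).1 le_rfl
        rcases Nat.eq_zero_or_pos t with ht | ht
        · subst ht; exact hD
        · rw [ih 1 d (a-b) le_rfl ht (by linarith) hd] at hD
          simp only [Nat.cast_one, one_mul] at hD
          simp only [hM, Nat.cast_one] at hle
          linarith
      · have hn2 : 2 ≤ n := by omega
        by_cases hba : b ≤ a
        · by_cases hmt : n = t + 1
          · exact lemA t n d (a - b) (by linarith) (by omega) ((h b hb0 hba).1 le_rfl)
          · have hnt2 : n ≤ t := by omega
            by_cases hwb : d * ((t:ℝ) - (n:ℝ) + 1) ≤ (n:ℝ) * (a - b)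
            · have hD := (h b hb0 hba).1 le_rfl
              rw [ih n d (a-b) hn1 hnt2 (by linarith) hd] at hD
              linarith
            · push_neg at hwb
              have hbpos : 0 < b := by
                rcases eq_or_lt_of_le hb0 with h' | h'
                · exfalso
                  rw [← h'] at hwb
                  simp only [hM] at hle
                  nlinarith
                · exact h'
              rcases (h 0 le_rfl ha).2 hbpos with hn | hD
              · omega
              · have hdb : 0 ≤ d - b := by linarith
                rw [ih (n-1) (d-b) a (by omega) (by omega) ha hdb] at hD
                rw [hcn] at hD
                -- hD : (n-1) * a < (d - b) * (t - (n-1) + 1) = (d-b) * M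
                have hDM : ((n:ℝ) - 1) * a < (d - b) * M := by
                  have : (t:ℝ) - ((n:ℝ) - 1) + 1 = M := by simp only [hM]; ring
                  rwa [this] at hD
                have h1 : M * ((n:ℝ) * (a - b)) < M * (d * (M - 1)) := by
                  have : d * ((t:ℝ) - (n:ℝ) + 1) = d * (M - 1) := by simp only [hM]; ring
                  rw [this] at hwb
                  exact mul_lt_mul_of_pos_left hwb hMpos
                have h2 : (n:ℝ) * (((n:ℝ) - 1) * a) < (n:ℝ) * ((d - b) * M) :=
                  mul_lt_mul_of_pos_left hDM hnpos
                have h3 : d * M * (M + (n:ℝ) - 1) ≤ (n:ℝ) * a * (M + (n:ℝ) - 1) :=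
                  mul_le_mul_of_nonneg_right hle (by linarith)
                linarith [h1, h2, h3]
        · push_neg at hba
          have hbpos : 0 < b := lt_of_le_of_lt ha hba
          rcases (h 0 le_rfl ha).2 hbpos with hn | hD
          · omega
          · rw [ih (n-1) (d-b) a (by omega) (by omega) ha (by linarith)] at hD
            rw [hcn] at hD
            have hDM : ((n:ℝ) - 1) * a < (d - b) * M := by
              have : (t:ℝ) - ((n:ℝ) - 1) + 1 = M := by simp only [hM]; ring
              rwa [this] at hD
            -- (n-1)a = na - a ≥ dM - a > dM - b ≥ dM - bM = (d-b)M, contradiction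
            nlinarith [mul_nonneg hb0 (show (0:ℝ) ≤ M - 1 by linarith)]
    · intro hlt  -- hlt : n * a < d * M
      have hd0 : 0 < d := by
        have hna : 0 ≤ (n:ℝ) * a := mul_nonneg (by positivity) ha
        by_contra hc
        push_neg at hc
        nlinarith [mul_nonneg (neg_nonneg.mpr hc) hMpos.le]
      set Lb : ℝ := a - d * (M - 1) / n with hLb
      set Ub : ℝ := (d * M - ((n:ℝ) - 1) * a) / M with hUb
      set L : ℝ := max 0 Lb with hL
      set U : ℝ := min d Ub with hU
      have hUb0 : 0 < Ub := by
        apply div_pos _ hMpos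
        nlinarith [hlt, ha, hn1']
      have hLbd : Lb < d := by
        have h7 : (a - d) * (n:ℝ) < d * (M - 1) := by
          nlinarith [mul_nonneg hd (show (0:ℝ) ≤ (n:ℝ) - 1 by linarith)]
        have h8 : a - d < d * (M - 1) / (n:ℝ) := (lt_div_iff₀ hnpos).mpr h7
        simp only [hLb]
        linarith
      have hLbUb : Lb < Ub := by
        have key : (n:ℝ) * a * (M + (n:ℝ) - 1) < d * M * (M + (n:ℝ) - 1) := by
          have := mul_lt_mul_of_pos_right hlt (show (0:ℝ) < M + (n:ℝ) - 1 by linarith)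
          linarith
        have h6 : Lb * ((n:ℝ) * M) < Ub * ((n:ℝ) * M) := by
          have r1 : Lb * ((n:ℝ) * M) = ((n:ℝ) * a - d * (M - 1)) * M := by
            simp only [hLb]; field_simp
          have r2 : Ub * ((n:ℝ) * M) = (d * M - ((n:ℝ) - 1) * a) * (n:ℝ) := by
            simp only [hUb]; field_simp
          rw [r1, r2]; linarith [key]
        exact lt_of_mul_lt_mul_right h6 (mul_pos hnpos hMpos).le
      have hLU : L < U := by
        rw [hL, hU]
        apply max_lt <;> apply lt_min
        · exact hd0
        · exact hUb0
        · exact hLbd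
        · exact hLbUb
      clear_value M Lb Ub L U
      refine ⟨(L + U)/2, ?_, ?_, ?_⟩
      · have : (0:ℝ) ≤ L := by rw [hL]; exact le_max_left _ _
        linarith
      · have : U ≤ d := by rw [hU]; exact min_le_left _ _
        linarith
      · intro b' hb'0 hb'a
        have hLblt : Lb < (L + U)/2 := by
          have : Lb ≤ L := by rw [hL]; exact le_max_right _ _
          linarith
        have hltUb : (L + U)/2 < Ub := by
          have : U ≤ Ub := by rw [hU]; exact min_le_right _ _
          linarith
        constructor
        · intro hbb'
          by_cases hmt : n = t + 1
          · exfalso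
            have hMeq : M = 1 := by
              rw [hM, hmt]; push_cast; ring
            rw [hLb, hMeq] at hLblt
            have hz : a - d * (1 - 1) / (n:ℝ) = a := by ring
            rw [hz] at hLblt
            linarith
          · have hnt2 : n ≤ t := by omega
            have ht1 : 1 ≤ t := le_trans hn1 hnt2
            rw [ih n d (a - b') hn1 hnt2 (by linarith) hd0.le]
            -- need n * (a - b') < d * (t - n + 1) = d * (M - 1)
            have hgoal : (t:ℝ) - (n:ℝ) + 1 = M - 1 := by simp only [hM]; ring
            rw [hgoal]
            have h5 : Lb < b' := lt_of_lt_of_le hLblt hbb'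
            simp only [hLb] at h5
            have e1 : d * (M - 1) / (n:ℝ) * (n:ℝ) = d * (M - 1) :=
              div_mul_cancel₀ _ (ne_of_gt hnpos)
            have h6 : (a - b') * (n:ℝ) < d * (M - 1) / (n:ℝ) * (n:ℝ) :=
              mul_lt_mul_of_pos_right (by linarith) hnpos
            linarith [e1, h6]
        · intro _
          by_cases hn' : n = 1
          · exact Or.inl hn'
          · right
            have hn2 : 2 ≤ n := by omega
            rw [ih (n-1) (d - (L + U)/2) a (by omega) (by omega) ha
              (by have : U ≤ d := by rw [hU]; exact min_le_left _ _
                  linarith)]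
            rw [hcn]
            have hgoal : (t:ℝ) - ((n:ℝ) - 1) + 1 = M := by simp only [hM]; ring
            rw [hgoal]
            -- need (n-1) * a < (d - b) * M  where b < Ub = (dM - (n-1)a)/M
            have e2 : Ub * M = d * M - ((n:ℝ) - 1) * a := by
              rw [hUb]; exact div_mul_cancel₀ _ (ne_of_gt hMpos)
            have h6 : (L + U)/2 * M < Ub * M := mul_lt_mul_of_pos_right hltUb hMpos
            linarith [e2, h6]

theorem stmt_13 (T N : ℕ) (hN : 1 ≤ N) (hNT : N ≤ T) (A D : ℝ) (hA : 0 ≤ A) (hD : 0 ≤ D) :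
    ¬ DariaWins T N D A ↔ D * ((T : ℝ) - N + 1) / N ≤ A := by
  rw [lemB T N D A hN hNT hA hD, not_lt,
    div_le_iff₀ (show (0:ℝ) < N by exact_mod_cast hN)]
  constructor <;> intro h <;> linarith
end

section
/- Fix a real k ≥ 1 and integers t ≥ 1, 1 ≤ n ≤ t, 0 ≤ s ≤ t. In the sequential bidding game with t rounds of which exactly s are special, where Alice wins a regular round by matching Daria's bid and wins a special round only by bidding at least k times Daria's bid, Daria needing n round-wins: if Daria's budget is d > 0 and Alice's budget a satisfies a < d·(t + s·(k-1) - k·(n-1))/n, then Daria has a winning strategy, namely bidding d/n in every round. -/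
/-- `DWins k π n d a` : in the sequential bidding game with special rounds,
where `π` lists the remaining rounds (`true` = special round, `false` = regular),
Daria needs `n` round-wins, has budget `d`, and Alice has budget `a`.
In each round Daria bids `b ∈ [0, d]` first, then Alice bids `b' ∈ [0, a]`;
Alice wins a regular round iff `b' ≥ b` and a special round iff `b' ≥ k·b`;
the winner's budget decreases by her bid; Daria wins the game upon `n` round-wins. -/
def DWins (k : ℝ) : List Bool → ℕ → ℝ → ℝ → Prop
  | [], _, _, _ => False
  | sp :: rest, n, d, a => ∃ b : ℝ, 0 ≤ b ∧ b ≤ d ∧ ∀ b' : ℝ, 0 ≤ b' → b' ≤ a →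
      ((if sp then k * b else b) ≤ b' → DWins k rest n d (a - b')) ∧
      (b' < (if sp then k * b else b) → (n = 1 ∨ DWins k rest (n - 1) (d - b) a))

lemma dwins_aux (k : ℝ) (hk : 1 ≤ k) :
    ∀ π : List Bool, ∀ n : ℕ, ∀ c a : ℝ, 1 ≤ n → 0 < c → 0 ≤ a →
      a < c * ((π.length : ℝ) + (π.count true : ℝ) * (k - 1) - k * ((n : ℝ) - 1)) →
      DWins k π n ((n : ℝ) * c) a := by
  intro π
  induction π with
  | nil =>
    intro n c a hn hc ha hA
    exfalso
    have h1 : (1 : ℝ) ≤ n := by exact_mod_cast hn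
    simp at hA
    nlinarith [mul_nonneg (by linarith : (0:ℝ) ≤ k) (by linarith : (0:ℝ) ≤ (n:ℝ) - 1)]
  | cons sp rest ih =>
    intro n c a hn hc ha hA
    have h1 : (1 : ℝ) ≤ n := by exact_mod_cast hn
    refine ⟨c, le_of_lt hc, by nlinarith, ?_⟩
    intro b' hb0 hba
    have hL : ((sp :: rest).length : ℝ) = (rest.length : ℝ) + 1 := by push_cast [List.length_cons]; ring
    have hS : ((sp :: rest).count true : ℝ)
        = (rest.count true : ℝ) + (if sp then (1:ℝ) else 0) := by
      cases sp <;> simp [List.count_cons]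
    rw [hL, hS] at hA
    constructor
    · intro hwin
      have hdd : DWins k rest n ((n : ℝ) * c) (a - b') := by
        apply ih n c (a - b') hn hc (by linarith)
        cases sp <;> simp_all <;> nlinarith
      exact hdd
    · intro hlose
      rcases eq_or_lt_of_le hn with h | h2
      · exact Or.inl h.symm
      · right
        have hn2 : 2 ≤ n := h2
        have hcast : ((n : ℝ)) * c - c = (((n - 1 : ℕ)) : ℝ) * c := by
          push_cast [Nat.cast_sub hn]; ring
        rw [hcast]
        apply ih (n - 1) c a (by omega) hc ha
        have hc2 : (((n - 1 : ℕ)) : ℝ) = (n : ℝ) - 1 := by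
          push_cast [Nat.cast_sub hn]; ring
        rw [hc2]
        cases sp <;> simp_all <;> nlinarith

theorem stmt_14 (k : ℝ) (hk : 1 ≤ k) (π : List Bool) (t n s : ℕ)
    (ht : π.length = t) (hs : π.count true = s) (hn : 1 ≤ n) (hnt : n ≤ t)
    (hst : s ≤ t) (d a : ℝ) (hd : 0 < d) (ha : 0 ≤ a)
    (hA : a < d * ((t : ℝ) + s * (k - 1) - k * ((n : ℝ) - 1)) / n) :
    DWins k π n d a := by
  have hn0 : (0 : ℝ) < n := by exact_mod_cast hn
  have hc : 0 < d / n := div_pos hd hn0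
  have hd' : d = (n : ℝ) * (d / n) := by field_simp
  rw [hd']
  apply dwins_aux k hk π n (d / n) a hn hc ha
  rw [ht, hs]
  rw [div_mul_eq_mul_div]
  exact hA
end
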